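/- arXiv:2103.05352 — 2 statements merged into one kernel-verified Lean document; each statement's English description precedes it below -/
import Mathlib

section
/- The diagonal subalgebra Δ(A) of Λ(A) is isomorphic as a *-algebra to the algebra s' of slowly increasing sequences with pointwise multiplication: the map φ(ξ) := the diagonal matrix with entries ξ_j is a *-algebra isomorphism from s' onto Δ(A), and for every m ∈ ℕ one has |ξ|_{-m} ≤ Σ_j |ξ_j| j^{-m} ≤ (π/√6) |ξ|_{-(m-1)} for all ξ ∈ s', so φ is also a topological isomorphism. -/
/-! The algebraic identities hold entrywise, since `diag ξ` has at most one nonzero entry in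
each row and column. A diagonal matrix lies in `Λ(A)` exactly when its diagonal grows at most
polynomially, and polynomial growth is equivalent to membership in `s'`: a square-summable
`ξ_j j^{-n}` is bounded by `|ξ|_{-n}`, and conversely `ξ_j = O(j^n)` gives `Σ |ξ_j|² j^{-2n-2} < ∞`
because `Σ j^{-2} < ∞`. For the norm estimates, the lower bound is `‖·‖_{ℓ²} ≤ ‖·‖_{ℓ¹}` applied
to `ξ_j j^{-m}`, and the upper bound is Cauchy–Schwarz for `ξ_j j^{-(m-1)}` against `1/j`, whose
`ℓ²`-norm is `π/√6` by the Basel problem. -/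

/-- The `n`-th norm `|ξ|_n = (Σ_j |ξ_j|² j^{2n})^{1/2}` of the space `s` of rapidly
decreasing sequences (indices shifted: `j : ℕ` stands for the positive integer `j+1`). -/
noncomputable def pnorm (n : ℕ) (ξ : ℕ → ℂ) : ℝ :=
  Real.sqrt (∑' j : ℕ, ‖ξ j‖ ^ 2 * ((j : ℝ) + 1) ^ (2 * n))

/-- The dual norm `|ξ|_{-n} = (Σ_j |ξ_j|² j^{-2n})^{1/2}`. -/
noncomputable def mnorm (n : ℕ) (ξ : ℕ → ℂ) : ℝ :=
  Real.sqrt (∑' j : ℕ, ‖ξ j‖ ^ 2 / ((j : ℝ) + 1) ^ (2 * n))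

/-- Membership in the space `s` of rapidly decreasing sequences. -/
def InS (ξ : ℕ → ℂ) : Prop :=
  ∀ n : ℕ, Summable fun j : ℕ => ‖ξ j‖ ^ 2 * ((j : ℝ) + 1) ^ (2 * n)

/-- Membership in the space `s'` of slowly increasing sequences. -/
def InS' (ξ : ℕ → ℂ) : Prop :=
  ∃ n : ℕ, Summable fun j : ℕ => ‖ξ j‖ ^ 2 / ((j : ℝ) + 1) ^ (2 * n)

/-- The pairing `⟨ξ, η⟩ = Σ_j ξ_j conj(η_j)` extending the `ℓ₂` inner product. -/
noncomputable def pairing (ξ η : ℕ → ℂ) : ℂ := ∑' j : ℕ, ξ j * (starRingEnd ℂ) (η j)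

/-- The Köthe PLB-weight `a_{ij,N,n}` (indices shifted by one). -/
noncomputable def kw (i j N n : ℕ) : ℝ :=
  max (((i : ℝ) + 1) ^ N / ((j : ℝ) + 1) ^ n) (((j : ℝ) + 1) ^ N / ((i : ℝ) + 1) ^ n)

/-- Membership in the matrix algebra `Λ(A)`. -/
def memLambda (x : ℕ → ℕ → ℂ) : Prop :=
  ∀ N : ℕ, ∃ n : ℕ, ∃ C : ℝ, ∀ i j : ℕ, ‖x i j‖ * kw i j N n ≤ C

/-- The embedding `φ : s' → Δ(A)` of a sequence as a diagonal matrix. -/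
def diagEmb (ξ : ℕ → ℂ) : ℕ → ℕ → ℂ := fun i j => if i = j then ξ i else 0

lemma hasSum_one_div_nat_add_one_sq :
    HasSum (fun j : ℕ => 1 / ((j : ℝ) + 1) ^ 2) (Real.pi ^ 2 / 6) := by
  simpa using (hasSum_nat_add_iff' 1).mpr hasSum_zeta_two

lemma sq_div_pow_two_mul {α : Type*} [DivisionCommMonoid α] (a b : α) (n : ℕ) :
    a ^ 2 / b ^ (2 * n) = (a / b ^ n) ^ 2 := by
  rw [div_pow, ← pow_mul, mul_comm n 2]

lemma Real.summable_mul_and_tsum_mul_le_sqrt_mul_sqrt {ι : Type*} {f g : ι → ℝ}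
    (hf : ∀ i, 0 ≤ f i) (hg : ∀ i, 0 ≤ g i)
    (hf_sum : Summable fun i => f i ^ 2) (hg_sum : Summable fun i => g i ^ 2) :
    (Summable fun i => f i * g i) ∧
      ∑' i, f i * g i ≤ √(∑' i, f i ^ 2) * √(∑' i, g i ^ 2) := by
  have := Real.summable_and_inner_le_Lp_mul_Lq_tsum_of_nonneg Real.HolderConjugate.two_two hf hg
    (by simpa only [Real.rpow_two] using hf_sum) (by simpa only [Real.rpow_two] using hg_sum)
  simpa only [Real.rpow_two, Real.sqrt_eq_rpow] using this

lemma Real.sqrt_tsum_sq_le_tsum {ι : Type*} {f : ι → ℝ} (hf : ∀ i, 0 ≤ f i)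
    (hsum : Summable f) : √(∑' i, f i ^ 2) ≤ ∑' i, f i := by
  set S := ∑' i, f i
  have hle : ∀ i, f i ^ 2 ≤ f i * S := fun i => by
    rw [sq]
    exact mul_le_mul_of_nonneg_left (hsum.le_tsum i fun j _ => hf j) (hf i)
  have hsq : Summable fun i => f i ^ 2 :=
    .of_nonneg_of_le (fun i => sq_nonneg _) hle (hsum.mul_right S)
  refine Real.sqrt_le_iff.mpr ⟨tsum_nonneg hf, ?_⟩
  calc ∑' i, f i ^ 2 ≤ ∑' i, f i * S := hsq.tsum_le_tsum hle (hsum.mul_right S)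
    _ = S ^ 2 := by rw [tsum_mul_right, sq]

lemma mnorm_eq_sqrt_tsum_sq (n : ℕ) (ξ : ℕ → ℂ) :
    mnorm n ξ = √(∑' j : ℕ, (‖ξ j‖ / ((j : ℝ) + 1) ^ n) ^ 2) := by
  simp only [mnorm, sq_div_pow_two_mul]

lemma norm_le_mnorm_mul_pow {n : ℕ} {ξ : ℕ → ℂ}
    (h : Summable fun j : ℕ => ‖ξ j‖ ^ 2 / ((j : ℝ) + 1) ^ (2 * n)) (j : ℕ) :
    ‖ξ j‖ ≤ mnorm n ξ * ((j : ℝ) + 1) ^ n := by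
  simp only [sq_div_pow_two_mul] at h
  rw [← div_le_iff₀ (by positivity), mnorm_eq_sqrt_tsum_sq]
  exact Real.le_sqrt_of_sq_le (h.le_tsum j fun k _ => sq_nonneg _)

lemma inS'_of_norm_le_mul_pow {ξ : ℕ → ℂ} (C : ℝ) (n : ℕ)
    (h : ∀ j, ‖ξ j‖ ≤ C * ((j : ℝ) + 1) ^ n) : InS' ξ := by
  refine ⟨n + 1, .of_nonneg_of_le (fun j => by positivity) (fun j => ?_)
    (hasSum_one_div_nat_add_one_sq.summable.mul_left (C ^ 2))⟩
  calc ‖ξ j‖ ^ 2 / ((j : ℝ) + 1) ^ (2 * (n + 1))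
      ≤ (C * ((j : ℝ) + 1) ^ n) ^ 2 / ((j : ℝ) + 1) ^ (2 * (n + 1)) := by
        gcongr
        exact h j
    _ = C ^ 2 * (1 / ((j : ℝ) + 1) ^ 2) := by
        field_simp
        ring

lemma mnorm_le_tsum_norm_div_pow {m : ℕ} {ξ : ℕ → ℂ}
    (h : Summable fun j : ℕ => ‖ξ j‖ / ((j : ℝ) + 1) ^ m) :
    mnorm m ξ ≤ ∑' j : ℕ, ‖ξ j‖ / ((j : ℝ) + 1) ^ m := by
  rw [mnorm_eq_sqrt_tsum_sq]
  exact Real.sqrt_tsum_sq_le_tsum (fun j => by positivity) h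

lemma summable_and_tsum_norm_div_pow_succ_le {m : ℕ} {ξ : ℕ → ℂ}
    (h : Summable fun j : ℕ => ‖ξ j‖ ^ 2 / ((j : ℝ) + 1) ^ (2 * m)) :
    (Summable fun j : ℕ => ‖ξ j‖ / ((j : ℝ) + 1) ^ (m + 1)) ∧
      ∑' j : ℕ, ‖ξ j‖ / ((j : ℝ) + 1) ^ (m + 1) ≤ (Real.pi / Real.sqrt 6) * mnorm m ξ := by
  have hsplit : ∀ j : ℕ, ‖ξ j‖ / ((j : ℝ) + 1) ^ (m + 1) =
      ‖ξ j‖ / ((j : ℝ) + 1) ^ m * (1 / ((j : ℝ) + 1)) := fun j => by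
    rw [pow_succ, div_mul_div_comm, mul_one]
  have hbasel : ∑' j : ℕ, (1 / ((j : ℝ) + 1)) ^ 2 = Real.pi ^ 2 / 6 := by
    simpa only [one_div_pow] using hasSum_one_div_nat_add_one_sq.tsum_eq
  obtain ⟨hsum, hle⟩ := Real.summable_mul_and_tsum_mul_le_sqrt_mul_sqrt
    (f := fun j : ℕ => ‖ξ j‖ / ((j : ℝ) + 1) ^ m) (g := fun j : ℕ => 1 / ((j : ℝ) + 1))
    (fun j => by positivity) (fun j => by positivity)
    (by simpa only [sq_div_pow_two_mul] using h)
    (by simpa only [one_div_pow] using hasSum_one_div_nat_add_one_sq.summable)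
  simp only [hsplit]
  refine ⟨hsum, hle.trans_eq ?_⟩
  rw [hbasel, ← mnorm_eq_sqrt_tsum_sq, Real.sqrt_div (sq_nonneg _),
    Real.sqrt_sq Real.pi_pos.le, mul_comm]

lemma diagEmb_add (ξ η : ℕ → ℂ) :
    diagEmb (ξ + η) = fun i j => diagEmb ξ i j + diagEmb η i j := by
  funext i j
  simp only [diagEmb, Pi.add_apply]
  split_ifs <;> simp

lemma diagEmb_smul (c : ℂ) (ξ : ℕ → ℂ) :
    diagEmb (c • ξ) = fun i j => c * diagEmb ξ i j := by
  funext i j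
  simp only [diagEmb, Pi.smul_apply, smul_eq_mul]
  split_ifs <;> simp

lemma tsum_diagEmb_mul_diagEmb (ξ η : ℕ → ℂ) (i j : ℕ) :
    ∑' k : ℕ, diagEmb ξ i k * diagEmb η k j = diagEmb (fun l => ξ l * η l) i j := by
  rw [tsum_eq_single i fun k hk => by simp [diagEmb, Ne.symm hk]]
  simp only [diagEmb]
  split_ifs <;> simp_all

lemma conj_diagEmb_transpose (ξ : ℕ → ℂ) :
    (fun i j => (starRingEnd ℂ) (diagEmb ξ j i)) = diagEmb fun l => (starRingEnd ℂ) (ξ l) := by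
  funext i j
  simp only [diagEmb]
  split_ifs <;> simp_all

lemma diagEmb_injective : Function.Injective diagEmb := fun ξ η h =>
  funext fun j => by simpa [diagEmb] using congr_fun (congr_fun h j) j

lemma diagEmb_diag {x : ℕ → ℕ → ℂ} (hx : ∀ i j, i ≠ j → x i j = 0) :
    diagEmb (fun j => x j j) = x := by
  funext i j
  simp only [diagEmb]
  split_ifs with h
  · rw [h]
  · exact (hx i j h).symm

lemma kw_self (i N n : ℕ) : kw i i N n = ((i : ℝ) + 1) ^ N / ((i : ℝ) + 1) ^ n := max_self _

lemma memLambda_diagEmb {ξ : ℕ → ℂ} (hξ : InS' ξ) : memLambda (diagEmb ξ) := by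
  obtain ⟨n, hn⟩ := hξ
  refine fun N => ⟨N + n, mnorm n ξ, fun i j => ?_⟩
  by_cases hij : i = j
  · subst hij
    rw [kw_self, pow_add, div_mul_cancel_left₀ (by positivity), ← div_eq_mul_inv]
    simp only [diagEmb]
    exact (div_le_iff₀ (by positivity)).mpr (norm_le_mnorm_mul_pow hn i)
  · simp only [diagEmb, if_neg hij, norm_zero, zero_mul]
    exact Real.sqrt_nonneg _

lemma inS'_diag_of_memLambda {x : ℕ → ℕ → ℂ} (hx : memLambda x) : InS' fun j => x j j := by
  obtain ⟨n, C, hC⟩ := hx 0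
  refine inS'_of_norm_le_mul_pow C n fun j => ?_
  have := hC j j
  rwa [kw_self, pow_zero, mul_one_div, div_le_iff₀ (by positivity)] at this

/-- `φ(ξ) := diag(ξ)` is a `*`-algebra isomorphism from `s'` (with pointwise
multiplication and conjugation) onto the diagonal subalgebra `Δ(A)` of `Λ(A)`, and the
estimates `|ξ|_{-m} ≤ Σ_j |ξ_j| j^{-m} ≤ (π/√6)|ξ|_{-(m-1)}` make it a topological
isomorphism. -/
theorem stmt13 :
    -- additive and homogeneous
    (∀ ξ η : ℕ → ℂ, diagEmb (ξ + η) = fun i j => diagEmb ξ i j + diagEmb η i j) ∧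
    (∀ (c : ℂ) (ξ : ℕ → ℂ), diagEmb (c • ξ) = fun i j => c * diagEmb ξ i j) ∧
    -- multiplicative: diagonal of the pointwise product is the matrix product
    (∀ ξ η : ℕ → ℂ, ∀ i j : ℕ,
      (∑' k : ℕ, diagEmb ξ i k * diagEmb η k j) = diagEmb (fun l => ξ l * η l) i j) ∧
    -- star-compatible: conjugate transpose corresponds to entrywise conjugation
    (∀ ξ : ℕ → ℂ, (fun i j => (starRingEnd ℂ) (diagEmb ξ j i)) =
      diagEmb fun l => (starRingEnd ℂ) (ξ l)) ∧
    -- injective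
    (∀ ξ η : ℕ → ℂ, diagEmb ξ = diagEmb η → ξ = η) ∧
    -- maps `s'` into `Λ(A)` and onto all diagonal matrices of `Λ(A)`
    (∀ ξ : ℕ → ℂ, InS' ξ → memLambda (diagEmb ξ)) ∧
    (∀ x : ℕ → ℕ → ℂ, (∀ i j, i ≠ j → x i j = 0) → memLambda x →
      InS' (fun j => x j j) ∧ diagEmb (fun j => x j j) = x) ∧
    -- the norm estimates (for `ξ` in the local Hilbert space of `s'` of step `m-1`)
    (∀ (m : ℕ) (ξ : ℕ → ℂ), 1 ≤ m →
      (Summable fun j : ℕ => ‖ξ j‖ ^ 2 / ((j : ℝ) + 1) ^ (2 * (m - 1))) →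
      mnorm m ξ ≤ (∑' j : ℕ, ‖ξ j‖ / ((j : ℝ) + 1) ^ m) ∧
      (∑' j : ℕ, ‖ξ j‖ / ((j : ℝ) + 1) ^ m) ≤
        (Real.pi / Real.sqrt 6) * mnorm (m - 1) ξ) := by
  refine ⟨diagEmb_add, diagEmb_smul, tsum_diagEmb_mul_diagEmb, conj_diagEmb_transpose,
    fun _ _ h => diagEmb_injective h, fun _ => memLambda_diagEmb,
    fun _ hoff hx => ⟨inS'_diag_of_memLambda hx, diagEmb_diag hoff⟩, ?_⟩
  rintro m ξ hm h
  obtain ⟨k, rfl⟩ := Nat.exists_eq_add_of_le' hm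
  rw [Nat.add_sub_cancel] at h ⊢
  obtain ⟨hsum, hle⟩ := summable_and_tsum_norm_div_pow_succ_le h
  exact ⟨mnorm_le_tsum_norm_div_pow hsum, hle⟩
end

section
/- The matrix algebra Λ(A) := {x ∈ ℂ^{ℕ×ℕ} : ∀N ∃n, sup_{i,j} |x_{ij}| max(i^N/j^n, j^N/i^n) < ∞} is closed under matrix multiplication: for x, y ∈ Λ(A), the series (xy)_{ij} = Σ_k x_{ik} y_{kj} converges absolutely and xy ∈ Λ(A). -/
noncomputable def decayWeight (N n i j : ℕ) : ℝ := ((i : ℝ) + 1) ^ N / ((j : ℝ) + 1) ^ n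

lemma kw_eq_max_decayWeight (i j N n : ℕ) :
    kw i j N n = max (decayWeight N n i j) (decayWeight N n j i) := rfl

lemma decayWeight_pos (N n i j : ℕ) : 0 < decayWeight N n i j := by
  unfold decayWeight; positivity

lemma decayWeight_anti {N n m : ℕ} (hnm : n ≤ m) (i j : ℕ) :
    decayWeight N m i j ≤ decayWeight N n i j :=
  div_le_div_of_nonneg_left (by positivity) (by positivity)
    (pow_le_pow_right₀ (by simp) hnm)

lemma decayWeight_mul_decayWeight (N n m i k j : ℕ) :
    decayWeight N n i k * decayWeight (n + 2) m k j
      = decayWeight N m i j * ((k : ℝ) + 1) ^ 2 := by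
  unfold decayWeight
  have : ((k : ℝ) + 1) ^ n ≠ 0 := by positivity
  have : ((j : ℝ) + 1) ^ m ≠ 0 := by positivity
  field_simp
  ring

lemma summable_div_succ_sq (C : ℝ) : Summable fun k : ℕ => C / ((k : ℝ) + 1) ^ 2 := by
  have h := (summable_nat_add_iff 1).2 (Real.summable_one_div_nat_pow.2 one_lt_two)
  simpa [div_eq_mul_one_div C] using h.mul_left C

def RapidDecay (f : ℕ → ℕ → ℝ) : Prop :=
  ∀ N : ℕ, ∃ n : ℕ, ∃ C : ℝ, ∀ i j : ℕ, f i j * decayWeight N n i j ≤ C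

namespace RapidDecay

variable {f g : ℕ → ℕ → ℝ}

lemma mono (hg : RapidDecay g) (hfg : ∀ i j, f i j ≤ g i j) : RapidDecay f := by
  intro N
  obtain ⟨n, C, hC⟩ := hg N
  exact ⟨n, C, fun i j =>
    (mul_le_mul_of_nonneg_right (hfg i j) (decayWeight_pos N n i j).le).trans (hC i j)⟩

/-- Bounding `g` with `N = n + 2` absorbs the factor `(k+1)^n` coming from `f` and leaves
a summable `1 / (k+1)^2`. -/
lemma exists_mul_le (hf0 : ∀ i j, 0 ≤ f i j) (hg0 : ∀ i j, 0 ≤ g i j)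
    (hf : RapidDecay f) (hg : RapidDecay g) (N : ℕ) :
    ∃ m : ℕ, ∃ C : ℝ, ∀ i j k : ℕ,
      f i k * g k j * decayWeight N m i j ≤ C / ((k : ℝ) + 1) ^ 2 := by
  obtain ⟨n, C, hC⟩ := hf N
  obtain ⟨m, D, hD⟩ := hg (n + 2)
  have hC0 : 0 ≤ C :=
    (mul_nonneg (hf0 0 0) (decayWeight_pos N n 0 0).le).trans (hC 0 0)
  refine ⟨m, C * D, fun i j k => ?_⟩
  have key : f i k * g k j * decayWeight N m i j * ((k : ℝ) + 1) ^ 2 ≤ C * D := by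
    calc f i k * g k j * decayWeight N m i j * ((k : ℝ) + 1) ^ 2
        = (f i k * decayWeight N n i k) * (g k j * decayWeight (n + 2) m k j) := by
          rw [mul_assoc _ (decayWeight N m i j), ← decayWeight_mul_decayWeight]; ring
      _ ≤ C * D := mul_le_mul (hC i k) (hD k j)
          (mul_nonneg (hg0 k j) (decayWeight_pos _ _ _ _).le) hC0
  rwa [le_div_iff₀ (by positivity)]

lemma summable_mul (hf0 : ∀ i j, 0 ≤ f i j) (hg0 : ∀ i j, 0 ≤ g i j)
    (hf : RapidDecay f) (hg : RapidDecay g) (i j : ℕ) :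
    Summable fun k => f i k * g k j := by
  obtain ⟨m, C, hC⟩ := exists_mul_le hf0 hg0 hf hg 0
  refine (summable_mul_right_iff (decayWeight_pos 0 m i j).ne').1 ?_
  exact (summable_div_succ_sq C).of_nonneg_of_le
    (fun k => mul_nonneg (mul_nonneg (hf0 i k) (hg0 k j)) (decayWeight_pos _ _ _ _).le)
    (hC i j)

lemma tsum_mul (hf0 : ∀ i j, 0 ≤ f i j) (hg0 : ∀ i j, 0 ≤ g i j)
    (hf : RapidDecay f) (hg : RapidDecay g) :
    RapidDecay fun i j => ∑' k, f i k * g k j := by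
  intro N
  obtain ⟨m, C, hC⟩ := exists_mul_le hf0 hg0 hf hg N
  refine ⟨m, ∑' k : ℕ, C / ((k : ℝ) + 1) ^ 2, fun i j => ?_⟩
  rw [← tsum_mul_right]
  exact ((summable_mul hf0 hg0 hf hg i j).mul_right _).tsum_le_tsum (hC i j)
    (summable_div_succ_sq C)

end RapidDecay

lemma memLambda_iff (x : ℕ → ℕ → ℂ) :
    memLambda x ↔ RapidDecay (fun i j => ‖x i j‖) ∧ RapidDecay (fun i j => ‖x j i‖) := by
  simp only [memLambda, RapidDecay, kw_eq_max_decayWeight,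
    mul_max_of_nonneg _ _ (norm_nonneg _), max_le_iff]
  constructor
  · intro h
    refine ⟨fun N => ?_, fun N => ?_⟩ <;> obtain ⟨n, C, hC⟩ := h N
    · exact ⟨n, C, fun i j => (hC i j).1⟩
    · exact ⟨n, C, fun i j => (hC j i).2⟩
  · rintro ⟨hrow, hcol⟩ N
    obtain ⟨n₁, C₁, hC₁⟩ := hrow N
    obtain ⟨n₂, C₂, hC₂⟩ := hcol N
    have weaken : ∀ {n C} (i j : ℕ) (z : ℂ), ‖z‖ * decayWeight N n i j ≤ C → n ≤ max n₁ n₂ →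
        ‖z‖ * decayWeight N (max n₁ n₂) i j ≤ C := fun i j z h hn =>
      (mul_le_mul_of_nonneg_left (decayWeight_anti hn i j) (norm_nonneg z)).trans h
    exact ⟨max n₁ n₂, max C₁ C₂, fun i j =>
      ⟨(weaken i j _ (hC₁ i j) (le_max_left _ _)).trans (le_max_left _ _),
       (weaken j i _ (hC₂ j i) (le_max_right _ _)).trans (le_max_right _ _)⟩⟩

lemma norm_tsum_mul_le {x y : ℕ → ℕ → ℂ} {i j : ℕ}
    (h : Summable fun k => ‖x i k‖ * ‖y k j‖) :
    ‖∑' k, x i k * y k j‖ ≤ ∑' k, ‖x i k‖ * ‖y k j‖ := by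
  simpa only [norm_mul] using norm_tsum_le_tsum_norm (f := fun k => x i k * y k j)
    (by simpa only [norm_mul] using h)

/-- `Λ(A)` is closed under matrix multiplication: the series `(xy)_{ij} = Σ_k x_{ik}y_{kj}`
converges absolutely and `xy ∈ Λ(A)`. -/
theorem stmt15 (x y : ℕ → ℕ → ℂ) (hx : memLambda x) (hy : memLambda y) :
    (∀ i j : ℕ, Summable fun k : ℕ => ‖x i k‖ * ‖y k j‖) ∧
    memLambda fun i j => ∑' k : ℕ, x i k * y k j := by
  rw [memLambda_iff] at hx hy
  obtain ⟨hx_row, hx_col⟩ := hx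
  obtain ⟨hy_row, hy_col⟩ := hy
  have h0 (z : ℕ → ℕ → ℂ) (i j : ℕ) : 0 ≤ ‖z i j‖ := norm_nonneg _
  have hsum := RapidDecay.summable_mul (h0 x) (h0 y) hx_row hy_row
  refine ⟨hsum, (memLambda_iff _).2 ⟨?_, ?_⟩⟩
  · exact (RapidDecay.tsum_mul (h0 x) (h0 y) hx_row hy_row).mono
      fun i j => norm_tsum_mul_le (hsum i j)
  · refine (RapidDecay.tsum_mul (h0 _) (h0 _) hy_col hx_col).mono fun i j => ?_
    simpa only [mul_comm ‖y _ _‖] using norm_tsum_mul_le (hsum j i)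
end
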